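/- arXiv:math/0102158 — 4 statements merged into one kernel-verified Lean document; each statement's English description precedes it below -/
import Mathlib

section
/- For every x₀ ∈ F_8 \ F_2 and every natural number n, there exists a sequence x : ℕ → F_8 with x 0 = x₀ such that for all i < n, x i ∉ F_2 and x(i+1)^2 + x(i+1) = x i + 1 + 1/(x i). -/
/-!
On `F₈` the map `traceF2 z = z + z² + z⁴` is the trace to `F₂`, and Frobenius gives
`(z + z⁴)² + (z + z⁴) = z + traceF2 z`, so `y = c + c⁴` solves `y² + y = c` whenever
`traceF2 c = 0`.
For `x ∈ F₈ \ F₂` we have `x⁷ = 1`, `x⁻¹ = x⁶`, and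
`traceF2 (x + 1 + x⁻¹) = 1 + x + x² + ⋯ + x⁶ = (x⁷ - 1) / (x - 1) = 0`.
Moreover `c = x + 1 + x⁻¹ ≠ 0` (otherwise `x² + x + 1 = 0`, so `x³ = 1 = x⁷` and `x = 1`),
hence `y ∉ F₂` and the step can be iterated forever.
-/

section CharTwo

variable {R : Type*} [CommRing R] [CharP R 2]

def traceF2 (z : R) : R := z + z ^ 2 + z ^ 4

theorem traceF2_add (a b : R) : traceF2 (a + b) = traceF2 a + traceF2 b := by
  have h4 : ∀ z : R, z ^ 4 = (z ^ 2) ^ 2 := fun z => by ring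
  simp only [traceF2, h4, CharTwo.add_sq]
  ring

theorem traceF2_one : traceF2 (1 : R) = 1 := by
  simp only [traceF2, one_pow, CharTwo.add_self_eq_zero, zero_add]

theorem add_pow_four_sq_add_self {z : R} (hz : z ^ 8 = z) :
    (z + z ^ 4) ^ 2 + (z + z ^ 4) = z + traceF2 z := by
  rw [CharTwo.add_sq, ← pow_mul, hz, traceF2]
  ring

theorem ne_zero_and_ne_one_of_sq_add_self_ne_zero {y : R} (hy : y ^ 2 + y ≠ 0) :
    y ≠ 0 ∧ y ≠ 1 := by
  refine ⟨fun h => hy (by simp [h]), fun h => hy ?_⟩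
  rw [h, one_pow, CharTwo.add_self_eq_zero]

end CharTwo

section CharTwoField

variable {F : Type*} [Field F]

theorem geom_sum_seven_eq_zero {x : F} (h7 : x ^ 7 = 1) (hx1 : x ≠ 1) :
    x ^ 6 + x ^ 5 + x ^ 4 + x ^ 3 + x ^ 2 + x + 1 = 0 := by
  refine (mul_eq_zero.mp ?_).resolve_left (sub_ne_zero.mpr hx1)
  linear_combination h7

theorem add_one_add_inv_ne_zero {x : F} (h7 : x ^ 7 = 1) (hx1 : x ≠ 1) :
    x + 1 + x⁻¹ ≠ 0 := by
  intro hc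
  have hx0 : x ≠ 0 := by rintro rfl; simp at h7
  have h2 : x ^ 2 + x + 1 = 0 := by linear_combination x * hc - mul_inv_cancel₀ hx0
  have h3 : x ^ 3 = 1 := by linear_combination (x - 1) * h2
  exact hx1 (by linear_combination h7 - (x ^ 4 + x) * h3)

variable [CharP F 2]

theorem traceF2_add_one_add_inv {x : F} (h7 : x ^ 7 = 1) (hx1 : x ≠ 1) :
    traceF2 (x + 1 + x⁻¹) = 0 := by
  have hinv : x⁻¹ = x ^ 6 := inv_eq_of_mul_eq_one_right (by rw [← pow_succ']; exact h7)
  have h12 : (x ^ 6) ^ 2 = x ^ 5 := by linear_combination x ^ 5 * h7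
  have h24 : (x ^ 6) ^ 4 = x ^ 3 := by linear_combination (x ^ 17 + x ^ 10 + x ^ 3) * h7
  rw [traceF2_add, traceF2_add, traceF2_one, hinv]
  simp only [traceF2, h12, h24]
  linear_combination geom_sum_seven_eq_zero h7 hx1

end CharTwoField

section EightElements

variable {F : Type*} [Field F] [Finite F]

theorem pow_eight_eq_self (hF : Nat.card F = 8) (x : F) : x ^ 8 = x := by
  have := Fintype.ofFinite F
  rw [← hF, Nat.card_eq_fintype_card, FiniteField.pow_card]

theorem pow_seven_eq_one (hF : Nat.card F = 8) {x : F} (hx0 : x ≠ 0) : x ^ 7 = 1 :=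
  mul_left_cancel₀ hx0 (by rw [← pow_succ', mul_one, pow_eight_eq_self hF])

variable [CharP F 2]

noncomputable def towerStep (x : F) : F := (x + 1 + x⁻¹) + (x + 1 + x⁻¹) ^ 4

theorem towerStep_sq_add_self (hF : Nat.card F = 8) {x : F} (hx0 : x ≠ 0) (hx1 : x ≠ 1) :
    towerStep x ^ 2 + towerStep x = x + 1 + x⁻¹ := by
  rw [towerStep, add_pow_four_sq_add_self (pow_eight_eq_self hF _),
    traceF2_add_one_add_inv (pow_seven_eq_one hF hx0) hx1, add_zero]

theorem towerStep_ne_zero_and_ne_one (hF : Nat.card F = 8) {x : F} (hx0 : x ≠ 0)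
    (hx1 : x ≠ 1) : towerStep x ≠ 0 ∧ towerStep x ≠ 1 :=
  ne_zero_and_ne_one_of_sq_add_self_ne_zero <| by
    rw [towerStep_sq_add_self hF hx0 hx1]
    exact add_one_add_inv_ne_zero (pow_seven_eq_one hF hx0) hx1

theorem iterate_towerStep_ne_zero_and_ne_one (hF : Nat.card F = 8) {x : F} (hx0 : x ≠ 0)
    (hx1 : x ≠ 1) (i : ℕ) : towerStep^[i] x ≠ 0 ∧ towerStep^[i] x ≠ 1 := by
  induction i with
  | zero => exact ⟨hx0, hx1⟩
  | succ i ih =>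
    rw [Function.iterate_succ_apply']
    exact towerStep_ne_zero_and_ne_one hF ih.1 ih.2

end EightElements

theorem stmt_3 (x₀ : GaloisField 2 3) (hx0 : x₀ ≠ 0) (hx1 : x₀ ≠ 1) (n : ℕ) :
    ∃ x : ℕ → GaloisField 2 3, x 0 = x₀ ∧
      ∀ i < n, (x i ≠ 0 ∧ x i ≠ 1) ∧
        (x (i + 1)) ^ 2 + x (i + 1) = x i + 1 + 1 / x i := by
  have hF : Nat.card (GaloisField 2 3) = 8 := GaloisField.card 2 3 (by norm_num)
  refine ⟨fun i => towerStep^[i] x₀, rfl, fun i _ => ?_⟩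
  have hxi := iterate_towerStep_ne_zero_and_ne_one hF hx0 hx1 i
  refine ⟨hxi, ?_⟩
  simp only [Function.iterate_succ_apply', one_div]
  exact towerStep_sq_add_self hF hxi.1 hxi.2
end

section
/- Define n_i = (⌊(i+2)/4⌋ + 2)·2^{i/2} for i even and n_i = (⌊i/4⌋ + 2)·2^{(i+1)/2} for i odd, and define g_i = 1 + Σ_{j=1}^{i-1} 2^{i-j-1} n_j. Then g_i = 2^{i+2} + 1 − (i+10)·2^{(i/2)−1} for i even (i ≥ 2) and g_i = 2^{i+2} + 1 − (i + 2⌊i/4⌋ + 15)·2^{(i−3)/2} for i odd (i ≥ 3). -/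
theorem grec_aux (n g : ℕ → ℕ)
    (hg : ∀ i, g i = 1 + ∑ j ∈ Finset.Icc 1 (i - 1), 2 ^ (i - j - 1) * n j)
    (i : ℕ) (hi : 1 ≤ i) : g (i + 1) + 1 = 2 * g i + n i := by
  rw [hg (i + 1), hg i]
  rw [show i + 1 - 1 = (i - 1) + 1 by omega]
  rw [Finset.sum_Icc_succ_top (by omega : 1 ≤ i - 1 + 1)]
  have h4 : ∀ j ∈ Finset.Icc 1 (i - 1),
      2 ^ (i + 1 - j - 1) * n j = 2 * (2 ^ (i - j - 1) * n j) := by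
    intro j hj
    simp only [Finset.mem_Icc] at hj
    rw [show i + 1 - j - 1 = (i - j - 1) + 1 by omega, pow_succ]
    ring
  rw [Finset.sum_congr rfl h4, show i - 1 + 1 = i by omega,
    show i + 1 - i - 1 = 0 by omega, pow_zero, one_mul, ← Finset.mul_sum]
  ring

theorem stmt_11 (n g : ℕ → ℕ)
    (hne : ∀ i, Even i → n i = ((i + 2) / 4 + 2) * 2 ^ (i / 2))
    (hno : ∀ i, Odd i → n i = (i / 4 + 2) * 2 ^ ((i + 1) / 2))
    (hg : ∀ i, g i = 1 + ∑ j ∈ Finset.Icc 1 (i - 1), 2 ^ (i - j - 1) * n j) :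
    ∀ i, 2 ≤ i →
      (Even i → (g i : ℤ) = 2 ^ (i + 2) + 1 - (i + 10) * 2 ^ (i / 2 - 1)) ∧
      (Odd i → 3 ≤ i →
        (g i : ℤ) = 2 ^ (i + 2) + 1 - (i + 2 * (i / 4) + 15) * 2 ^ ((i - 3) / 2)) := by
  intro i hi
  induction i, hi using Nat.le_induction with
  | base =>
    constructor
    · intro _
      have h2 : g 2 = 5 := by
        rw [hg 2]
        norm_num [Finset.Icc_self, hno 1 odd_one]
      rw [h2]; norm_num
    · intro h; exact absurd h (by decide)
  | succ i hi IH =>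
    rcases Nat.even_or_odd i with he | ho
    · -- i even, i+1 odd
      constructor
      · intro h
        rw [Nat.even_add_one] at h
        exact absurd he h
      · intro _ _
        obtain ⟨m, rfl⟩ := he
        have hm : 1 ≤ m := by omega
        have key := grec_aux n g hg (m + m) (by omega)
        have keyZ : (g (m + m + 1) : ℤ) = 2 * g (m + m) + n (m + m) - 1 := by
          have := congrArg (Nat.cast : ℕ → ℤ) key
          push_cast at this
          linarith
        have hgiZ : (g (m + m) : ℤ) = 2 ^ (m + m + 2) + 1 - (↑(m + m) + 10) * 2 ^ (m - 1) := by
          rw [IH.1 ⟨m, rfl⟩, show (m + m) / 2 - 1 = m - 1 by omega]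
        have hniZ : (n (m + m) : ℤ) = (↑((m + m + 2) / 4) + 2) * (2 * 2 ^ (m - 1)) := by
          rw [hne (m + m) ⟨m, rfl⟩]
          push_cast
          rw [show (m + m) / 2 = (m - 1) + 1 by omega, pow_succ]
          ring
        have hpow2 : (2 : ℤ) ^ (m + m + 1 + 2) = 2 * 2 ^ (m + m + 2) := by
          rw [show m + m + 1 + 2 = (m + m + 2) + 1 by omega, pow_succ]; ring
        have hd : ((m : ℤ) + m + 2) / 4 + ((m : ℤ) + m + 1) / 4 = m := by omega
        rw [keyZ, hgiZ, hniZ, show (m + m + 1 - 3) / 2 = m - 1 by omega, hpow2]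
        push_cast
        linear_combination 2 * (2 : ℤ) ^ (m - 1) * hd
    · -- i odd, i+1 even
      constructor
      · intro _
        obtain ⟨m, rfl⟩ := ho
        have hm : 1 ≤ m := by omega
        have key := grec_aux n g hg (2 * m + 1) (by omega)
        have keyZ : (g (2 * m + 1 + 1) : ℤ) = 2 * g (2 * m + 1) + n (2 * m + 1) - 1 := by
          have := congrArg (Nat.cast : ℕ → ℤ) key
          push_cast at this
          linarith
        have hgiZ : (g (2 * m + 1) : ℤ) = 2 ^ (2 * m + 1 + 2) + 1 -
            (↑(2 * m + 1) + 2 * ((↑(2 * m + 1) : ℤ) / 4) + 15) * 2 ^ (m - 1) := by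
          rw [IH.2 ⟨m, rfl⟩ (by omega), show (2 * m + 1 - 3) / 2 = m - 1 by omega]
        have hniZ : (n (2 * m + 1) : ℤ) = (↑((2 * m + 1) / 4) + 2) * (4 * 2 ^ (m - 1)) := by
          rw [hno (2 * m + 1) ⟨m, rfl⟩]
          push_cast
          rw [show (2 * m + 1 + 1) / 2 = (m - 1) + 1 + 1 by omega, pow_succ, pow_succ]
          ring
        have hpow2 : (2 : ℤ) ^ (2 * m + 1 + 1 + 2) = 2 * 2 ^ (2 * m + 1 + 2) := by
          rw [show 2 * m + 1 + 1 + 2 = (2 * m + 1 + 2) + 1 by omega, pow_succ]; ring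
        have hm2 : (2 : ℤ) ^ m = 2 * 2 ^ (m - 1) := by
          nth_rewrite 1 [show m = (m - 1) + 1 by omega]
          rw [pow_succ]; ring
        rw [keyZ, hgiZ, hniZ, show (2 * m + 1 + 1) / 2 - 1 = m by omega, hpow2]
        push_cast
        linear_combination (2 * (m : ℤ) + 12) * hm2
      · intro h _
        rw [Nat.odd_add_one] at h
        exact absurd ho (by simpa using h)
end

section
/- Let F be a field of characteristic 2 and m, m' nonzero elements of t·F[[t]] with m' = a²·m·u where a ∈ F is nonzero and u ∈ F[[t]] is a unit with u ≡ 1 mod (m). Then 1/m' − a/m ∈ F[[t]], provided a³ = 1 (a ∈ F_4^× with a² = 1/a). -/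
/-!
Since `a³ = 1`, `(a²)⁻¹ = a`, so `1/m' = (a/m) u⁻¹`; and `u⁻¹ - 1 = -m w u⁻¹`, whose factor `m`
cancels the pole of `a/m`, leaving the power series `-a w u⁻¹`.
-/

theorem inv_sq_mul_mul_sub_mul_inv {K : Type*} [Field K] {a M U V W : K} (ha : a ^ 3 = 1)
    (hM : M ≠ 0) (hUV : U * V = 1) (hU : U = 1 + M * W) :
    (a ^ 2 * M * U)⁻¹ - a * M⁻¹ = -(a * W * V) := by
  have ha0 : a ≠ 0 := by rintro rfl; simp at ha
  have hU0 : U ≠ 0 := left_ne_zero_of_mul_eq_one hUV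
  field_simp
  subst hU
  linear_combination -ha + a ^ 3 * M * W * hUV

theorem stmt_15_general (F : Type*) [Field F]
    (a : F) (ha3 : a ^ 3 = 1)
    (m m' u : PowerSeries F)
    (hm0 : PowerSeries.constantCoeff m = 0)
    (hm : m ≠ 0)
    (hu : ∃ w : PowerSeries F, u = 1 + m * w)
    (hrec : m' = PowerSeries.C (a ^ 2) * m * u) :
    ∃ g : PowerSeries F,
      ((m' : LaurentSeries F))⁻¹ -
        ((PowerSeries.C a : PowerSeries F) : LaurentSeries F) * (m : LaurentSeries F)⁻¹ =
          (g : LaurentSeries F) := by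
  obtain ⟨w, hw⟩ := hu
  obtain ⟨v, rfl⟩ : IsUnit u := PowerSeries.isUnit_iff_constantCoeff.2 (by simp [hw, hm0])
  let φ := HahnSeries.ofPowerSeries ℤ F
  refine ⟨-(PowerSeries.C a * w * ↑v⁻¹), ?_⟩
  have key := inv_sq_mul_mul_sub_mul_inv (M := φ m) (U := φ v) (V := φ ↑v⁻¹) (W := φ w)
    (show φ (PowerSeries.C a) ^ 3 = 1 by rw [← map_pow, ← map_pow, ha3, map_one, map_one])
    ((map_ne_zero_iff φ HahnSeries.ofPowerSeries_injective).2 hm)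
    (by rw [← map_mul, v.mul_inv, map_one])
    (by rw [hw, map_add, map_one, map_mul])
  subst hrec
  simpa only [map_mul, map_neg, map_pow] using key

theorem stmt_15 (F : Type*) [Field F] [CharP F 2]
    (a : F) (ha : a ≠ 0) (ha3 : a ^ 3 = 1)
    (m m' u : PowerSeries F)
    (hm0 : PowerSeries.constantCoeff m = 0)
    (hm : m ≠ 0) (hm' : m' ≠ 0)
    (hu : ∃ w : PowerSeries F, u = 1 + m * w)
    (hrec : m' = PowerSeries.C (a ^ 2) * m * u) :
    ∃ g : PowerSeries F,
      ((m' : LaurentSeries F))⁻¹ -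
        ((PowerSeries.C a : PowerSeries F) : LaurentSeries F) * (m : LaurentSeries F)⁻¹ =
          (g : LaurentSeries F) :=
  stmt_15_general F a ha3 m m' u hm0 hm hu hrec
end

section
/- For natural numbers i ≥ 1, the sum Σ_{j=1}^{i−1} 2^{i−j−1}·n_j with n_j = (⌊(j+2)/4⌋+2)·2^{j/2} for j even and n_j = (⌊j/4⌋+2)·2^{(j+1)/2} for j odd satisfies Σ_{j=1}^{i−1} 2^{i−j−1} n_j / 2^{i+2} → 1 as i → ∞; in particular (with g_i = 1 + Σ) the ratio of the number of split points 6·2^i to g_i tends to 3/2. -/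
/-!
Writing `S i = ∑_{j=1}^{i-1} 2^(i-j-1) n_j`, we have `S (i+1) = 2 S i + n_i`. The defect
`2^(i+2) - S i` therefore satisfies `d (i+1) = 2 d i - n_i`, which an explicit closed form with
`d i ≤ (i+9) 2^(i/2)` solves. Hence `S i / 2^(i+2) = 1 - d i / 2^(i+2) → 1`, and
`6 · 2^i / g i = 6 / (2^(-i) + 4 S i / 2^(i+2)) → 3/2`.
-/

open Filter Topology

def weightedSum {R : Type*} [CommSemiring R] (a : ℕ → R) (i : ℕ) : R :=
  ∑ j ∈ Finset.Icc 1 (i - 1), 2 ^ (i - j - 1) * a j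

theorem weightedSum_succ {R : Type*} [CommSemiring R] (a : ℕ → R) {i : ℕ} (hi : 1 ≤ i) :
    weightedSum a (i + 1) = 2 * weightedSum a i + a i := by
  have hIcc : Finset.Icc 1 (i + 1 - 1) = insert i (Finset.Icc 1 (i - 1)) := by
    ext x; simp only [Finset.mem_Icc, Finset.mem_insert]; omega
  have hterm : ∀ j ∈ Finset.Icc 1 (i - 1),
      (2 : R) ^ (i + 1 - j - 1) * a j = 2 * (2 ^ (i - j - 1) * a j) := by
    intro j hj
    rw [Finset.mem_Icc] at hj
    rw [show i + 1 - j - 1 = i - j - 1 + 1 by omega, pow_succ]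
    ring
  rw [weightedSum, hIcc, Finset.sum_insert (by simp only [Finset.mem_Icc]; omega), Finset.sum_congr rfl hterm,
    ← Finset.mul_sum, show i + 1 - i - 1 = 0 by omega, pow_zero, one_mul, add_comm]
  rfl

def numRamified (j : ℕ) : ℕ :=
  if Even j then ((j + 2) / 4 + 2) * 2 ^ (j / 2) else (j / 4 + 2) * 2 ^ ((j + 1) / 2)

def genusDefect (i : ℕ) : ℕ :=
  if Even i then (i / 2 + 5) * 2 ^ (i / 2) else (i / 2 + i / 4 + 8) * 2 ^ (i / 2)

theorem genusDefect_succ_add_numRamified (i : ℕ) :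
    genusDefect (i + 1) + numRamified i = 2 * genusDefect i := by
  rcases Nat.even_or_odd' i with ⟨k, rfl | rfl⟩
  · have hodd : ¬ Even (2 * k + 1) := Nat.not_even_two_mul_add_one k
    simp only [genusDefect, numRamified, even_two_mul, hodd, if_true, if_false,
      show (2 * k + 1) / 2 = k by omega, show 2 * k / 2 = k by omega]
    rw [← add_mul, show k + (2 * k + 1) / 4 + 8 + ((2 * k + 2) / 4 + 2) = 2 * (k + 5) by omega,
      mul_assoc]
  · have heven : Even (2 * k + 1 + 1) := ⟨k + 1, by ring⟩
    simp only [genusDefect, numRamified, heven, Nat.not_even_two_mul_add_one, if_true, if_false,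
      show (2 * k + 1 + 1) / 2 = k + 1 by omega, show (2 * k + 1) / 2 = k by omega]
    rw [← add_mul, show k + 1 + 5 + ((2 * k + 1) / 4 + 2) = k + (2 * k + 1) / 4 + 8 by omega,
      pow_succ]
    ring

theorem genusDefect_le (i : ℕ) : genusDefect i ≤ (2 * (i / 2) + 9) * 2 ^ (i / 2) := by
  unfold genusDefect
  split_ifs <;> exact Nat.mul_le_mul_right _ (by omega)

theorem weightedSum_numRamified {R : Type*} [CommRing R] {i : ℕ} (hi : 1 ≤ i) :
    weightedSum (fun j => (numRamified j : R)) i = 2 ^ (i + 2) - genusDefect i := by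
  induction i, hi using Nat.le_induction with
  | base => simp [weightedSum, genusDefect]; norm_num
  | succ i hi ih =>
    have hrec := congrArg (Nat.cast : ℕ → R) (genusDefect_succ_add_numRamified i)
    push_cast at hrec
    rw [weightedSum_succ _ hi, ih, pow_succ]
    linear_combination hrec

theorem tendsto_genusDefect_div_two_pow :
    Tendsto (fun i => (genusDefect i : ℝ) / 2 ^ (i + 2)) atTop (𝓝 0) := by
  have hlin : Tendsto (fun k : ℕ => ((2 * k + 9 : ℕ) : ℝ) / 2 ^ k) atTop (𝓝 0) := by
    have hself := tendsto_pow_const_div_const_pow_of_one_lt 1 (one_lt_two (α := ℝ))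
    have hinv := tendsto_inv_atTop_zero.comp
      (tendsto_pow_atTop_atTop_of_one_lt (one_lt_two (α := ℝ)))
    have hsum := (hself.const_mul 2).add (hinv.const_mul 9)
    rw [mul_zero, mul_zero, add_zero] at hsum
    refine hsum.congr fun k => ?_
    simp only [Function.comp_apply, pow_one]
    push_cast
    ring
  refine squeeze_zero (fun i => by positivity) (fun i => ?_)
    (hlin.comp (Nat.tendsto_div_const_atTop two_ne_zero))
  rw [Function.comp_apply, div_le_div_iff₀ (by positivity) (by positivity)]
  have hbound : genusDefect i * 2 ^ (i / 2) ≤ (2 * (i / 2) + 9) * 2 ^ (i + 2) :=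
    calc genusDefect i * 2 ^ (i / 2) ≤ (2 * (i / 2) + 9) * 2 ^ (i / 2) * 2 ^ (i / 2) :=
          Nat.mul_le_mul_right _ (genusDefect_le i)
      _ = (2 * (i / 2) + 9) * 2 ^ (i / 2 + i / 2) := by rw [pow_add, mul_assoc]
      _ ≤ (2 * (i / 2) + 9) * 2 ^ (i + 2) :=
          Nat.mul_le_mul_left _ (Nat.pow_le_pow_right two_pos (by omega))
  exact_mod_cast hbound

theorem tendsto_six_mul_two_pow_div_one_add {S : ℕ → ℝ}
    (hS : Tendsto (fun i => S i / 2 ^ (i + 2)) atTop (𝓝 1)) :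
    Tendsto (fun i => 6 * 2 ^ i / (1 + S i)) atTop (𝓝 (3 / 2)) := by
  have hden : Tendsto (fun i : ℕ => ((2 : ℝ) ^ i)⁻¹ + 4 * (S i / 2 ^ (i + 2))) atTop (𝓝 4) := by
    simpa using (tendsto_inv_atTop_zero.comp
      (tendsto_pow_atTop_atTop_of_one_lt (one_lt_two (α := ℝ)))).add (hS.const_mul 4)
  have hlim := (hden.inv₀ (by norm_num)).const_mul 6
  rw [show (6 : ℝ) * 4⁻¹ = 3 / 2 by norm_num] at hlim
  refine hlim.congr fun i => ?_
  have hrescale : ((2 : ℝ) ^ i)⁻¹ + 4 * (S i / 2 ^ (i + 2)) = (1 + S i) / 2 ^ i := by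
    rw [pow_add]
    field_simp
    ring
  rw [hrescale, inv_div, mul_div_assoc]

theorem stmt_19 (n : ℕ → ℝ)
    (hne : ∀ j, Even j → n j = (((j + 2) / 4 + 2 : ℕ) : ℝ) * 2 ^ (j / 2))
    (hno : ∀ j, Odd j → n j = ((j / 4 + 2 : ℕ) : ℝ) * 2 ^ ((j + 1) / 2))
    (g : ℕ → ℝ)
    (hg : ∀ i, g i = 1 + ∑ j ∈ Finset.Icc 1 (i - 1), 2 ^ (i - j - 1) * n j) :
    Filter.Tendsto
      (fun i => (∑ j ∈ Finset.Icc 1 (i - 1), 2 ^ (i - j - 1) * n j) / 2 ^ (i + 2))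
      Filter.atTop (nhds 1) ∧
    Filter.Tendsto (fun i => (6 * 2 ^ i) / g i) Filter.atTop (nhds (3 / 2)) := by
  have hn : n = fun j => (numRamified j : ℝ) := by
    funext j
    rcases Nat.even_or_odd j with hj | hj
    · rw [hne j hj, numRamified, if_pos hj]; push_cast; ring
    · rw [hno j hj, numRamified, if_neg (Nat.not_even_iff_odd.mpr hj)]; push_cast; ring
  subst hn
  have hS : Tendsto (fun i => weightedSum (fun j => (numRamified j : ℝ)) i / 2 ^ (i + 2))
      atTop (𝓝 1) := by
    have hlim := tendsto_const_nhds (x := (1 : ℝ)).sub tendsto_genusDefect_div_two_pow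
    rw [sub_zero] at hlim
    refine hlim.congr' ?_
    filter_upwards [eventually_ge_atTop 1] with i hi
    rw [weightedSum_numRamified hi, sub_div, div_self (by positivity)]
  refine ⟨hS, ?_⟩
  simp_rw [hg]
  exact tendsto_six_mul_two_pow_div_one_add hS
end
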